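/- For every ℓ > 0 and α ∈ (0, π/2), the set {θ ∈ (arctan(2ℓ + tan α), π/2) : ρ(F_{ℓ,α,θ}) ∉ ℚ} has empty interior; that is, every nonempty open subinterval of (arctan(2ℓ + tan α), π/2) contains a parameter θ with ρ(F_{ℓ,α,θ}) ∈ ℚ. -/

import Mathlib

open Real Filter Set

/-- Rotation number of a lift `T` of a circle homeomorphism,
defined as the limit of `T^[n] 0 / n` (which exists and is independent
of the base point for lifts of orientation-preserving circle homeos). -/
noncomputable def rotationNumber (T : ℝ → ℝ) : ℝ :=
  limUnder atTop (fun n : ℕ => T^[n] 0 / (n : ℝ))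

/-- The expansion factor `Λ = sin(θ+α)/sin(θ−α)`. -/
noncomputable def Lam (α θ : ℝ) : ℝ := Real.sin (θ + α) / Real.sin (θ - α)

/-- The break point of increase `a₀ = (tan θ − 2ℓ)/(2 tan θ)`. -/
noncomputable def brk0 (ℓ θ : ℝ) : ℝ := (Real.tan θ - 2 * ℓ) / (2 * Real.tan θ)

/-- The break point of decrease `a₁ = −(2ℓ + tan α)/(2 tan θ)`. -/
noncomputable def brk1 (ℓ α θ : ℝ) : ℝ := -(2 * ℓ + Real.tan α) / (2 * Real.tan θ)

/-- The two-piece definition of the lift on the fundamental interval `[a₁, a₁+1)`. -/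
noncomputable def Ftrap0 (ℓ α θ x : ℝ) : ℝ :=
  if x ≤ brk0 ℓ θ then -brk1 ℓ α θ + (Lam α θ)⁻¹ * (x - brk1 ℓ α θ)
  else 1 - brk0 ℓ θ + Lam α θ * (x - brk0 ℓ θ)

/-- The lift `F_{ℓ,α,θ} : ℝ → ℝ` of the Poincaré map of the internal-wave
billiard in a rectangular trapezoid: it is given by the two-piece formula on
`[a₁, a₁+1)` and extended by `F(x+k) = F(x)+k` for `k ∈ ℤ`. -/
noncomputable def Ftrap (ℓ α θ x : ℝ) : ℝ :=
  Ftrap0 ℓ α θ (x - ⌊x - brk1 ℓ α θ⌋) + ⌊x - brk1 ℓ α θ⌋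

/-!
Write `m = tan α` and `t = tan θ`. For `t < t'` the lift at `t'` lies below the lift at `t` by a
uniform margin, so the rotation number is antitone in `t`; it is also continuous, being the uniform
limit of `F^[n] 0 / n`. A uniform gap `G + ε ≤ F` between circle lifts cannot leave an irrational
translation number `ρ` unchanged: by Dirichlet, `q ρ` lies within `ε` of an integer `p`, and the gap
between `G^q` and `F^q` pushes the translation numbers of these iterates to opposite sides of `p`.
So on any parameter interval the rotation number is rational at the right end or strictly smaller
there than at the left end, and in the second case the intermediate value theorem produces a
rational value.
-/

theorem sub_floor_sub_mem_Ico (x a : ℝ) : x - ⌊x - a⌋ ∈ Ico a (a + 1) :=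
  ⟨by linarith [Int.floor_le (x - a)], by linarith [Int.lt_floor_add_one (x - a)]⟩

namespace CircleDeg1Lift

local notation "τ" => translationNumber

theorem rotationNumber_eq_translationNumber (f : CircleDeg1Lift) :
    rotationNumber f = τ f := by
  rw [rotationNumber]
  simpa only [coe_pow] using f.tendsto_translation_number₀.limUnder_eq

theorem forall_add_le_of_forall_mem_Ico {f g : CircleDeg1Lift} {a ε : ℝ}
    (h : ∀ x ∈ Ico a (a + 1), g x + ε ≤ f x) (x : ℝ) : g x + ε ≤ f x := by
  have := h _ (sub_floor_sub_mem_Ico x a)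
  rw [f.map_sub_int, g.map_sub_int] at this
  linarith

variable {f g : CircleDeg1Lift} {ε : ℝ}

theorem pow_apply_add_le (hε : 0 ≤ ε) (h : ∀ x, g x + ε ≤ f x) {n : ℕ} (hn : 0 < n)
    (x : ℝ) : (g ^ n) x + ε ≤ (f ^ n) x := by
  induction n, hn using Nat.le_induction generalizing x with
  | base => simpa using h x
  | succ n hn ih =>
    rw [pow_succ', pow_succ', mul_apply, mul_apply]
    calc g ((g ^ n) x) + ε ≤ f ((g ^ n) x) := h _
      _ ≤ f ((f ^ n) x) := f.mono (by linarith [ih x])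

theorem translationNumber_le_or_add_le (h : ∀ x, g x + ε ≤ f x) (m : ℤ) :
    τ g ≤ m ∨ m + ε ≤ τ f := by
  by_cases hx : ∃ x, f x ≤ x + (m + ε)
  · obtain ⟨x, hx⟩ := hx
    exact Or.inl (g.translationNumber_le_of_le_add_int (x := x) (by linarith [h x]))
  · push Not at hx
    exact Or.inr (f.le_translationNumber_of_add_le fun x => (hx x).le)

theorem translationNumber_le_sub_or_le (h : ∀ x, g x + ε ≤ f x) (m : ℤ) :
    τ g ≤ m - ε ∨ (m : ℝ) ≤ τ f := by
  by_cases hx : ∃ x, x + (m - ε) ≤ g x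
  · obtain ⟨x, hx⟩ := hx
    exact Or.inr (f.le_translationNumber_of_add_int_le (x := x) (by linarith [h x]))
  · push Not at hx
    exact Or.inl (g.translationNumber_le_of_le_add fun x => (hx x).le)

theorem translationNumber_lt_of_irrational (hε : 0 < ε) (h : ∀ x, g x + ε ≤ f x)
    (hg : Irrational (τ g)) : τ g < τ f := by
  refine (translationNumber_mono fun x => by linarith [h x]).lt_of_ne fun heq => ?_
  obtain ⟨n, hn⟩ := exists_nat_one_div_lt hε
  obtain ⟨q, hq, -, hqρ⟩ := Real.exists_nat_abs_mul_sub_round_le (τ g) n.succ_pos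
  set p := round ((q : ℝ) * τ g)
  have hclose : |(q : ℝ) * τ g - p| < ε := by
    push_cast at hqρ
    exact hqρ.trans_lt ((one_div_le_one_div_of_le (by positivity) (by linarith)).trans_lt hn)
  have hne : (q : ℝ) * τ g ≠ p := (hg.natCast_mul hq.ne').ne_int p
  have hpow := pow_apply_add_le hε.le h hq
  rw [abs_lt] at hclose
  rcases hne.lt_or_gt with hlt | hgt
  · have := translationNumber_le_sub_or_le hpow p
    rw [translationNumber_pow, translationNumber_pow, ← heq] at this
    rcases this with h' | h' <;> linarith
  · have := translationNumber_le_or_add_le hpow p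
    rw [translationNumber_pow, translationNumber_pow, ← heq] at this
    rcases this with h' | h' <;> linarith

theorem continuous_translationNumber {X : Type*} [TopologicalSpace X] {f : X → CircleDeg1Lift}
    (hf : Continuous fun p : X × ℝ => f p.1 p.2) : Continuous fun p => τ (f p) := by
  have hiter : ∀ n : ℕ, Continuous fun p => (f p ^ n) 0 := by
    intro n
    induction n with
    | zero => simpa using continuous_const
    | succ n ih =>
      simp only [pow_succ', mul_apply]
      exact hf.comp (continuous_id.prodMk ih)
  refine TendstoUniformly.continuous (p := atTop)
    (F := fun (n : ℕ) p => (f p ^ (n + 1)) 0 / ((n : ℝ) + 1)) (f := fun p => τ (f p)) ?_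
    (Frequently.of_forall fun n => (hiter (n + 1)).div_const _)
  rw [Metric.tendstoUniformly_iff]
  intro δ hδ
  obtain ⟨N, hN⟩ := exists_nat_one_div_lt hδ
  filter_upwards [eventually_ge_atTop N] with n hn p
  have hn1 : (0 : ℝ) < n + 1 := n.cast_add_one_pos
  have key := (f p).dist_pow_map_zero_mul_translationNumber_le (n + 1)
  rw [Real.dist_eq, Nat.cast_add_one] at key
  rw [Real.dist_eq, ← abs_neg, neg_sub, div_sub' hn1.ne', abs_div, abs_of_pos hn1]
  calc |(f p ^ (n + 1)) 0 - (n + 1) * τ (f p)| / (n + 1) ≤ 1 / (n + 1) := by gcongr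
    _ ≤ 1 / (N + 1) := by gcongr
    _ < δ := hN

end CircleDeg1Lift

/-- The extension of `H : [a, a + 1) → ℝ` to `ℝ` by `F (x + k) = F x + k`, `k ∈ ℤ`. -/
noncomputable def floorExtend (a : ℝ) (H : ℝ → ℝ) (x : ℝ) : ℝ :=
  H (x - ⌊x - a⌋) + ⌊x - a⌋

section floorExtend

variable {a : ℝ} {H : ℝ → ℝ}

theorem floorExtend_add_one (x : ℝ) : floorExtend a H (x + 1) = floorExtend a H x + 1 := by
  rw [floorExtend, floorExtend, show x + 1 - a = x - a + 1 by ring, Int.floor_add_one]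
  push_cast
  ring_nf

theorem floorExtend_of_mem_Ico {x : ℝ} (hx : x ∈ Ico a (a + 1)) : floorExtend a H x = H x := by
  have : ⌊x - a⌋ = 0 := Int.floor_eq_zero_iff.2 ⟨by linarith [hx.1], by linarith [hx.2]⟩
  simp [floorExtend, this]

theorem monotone_floorExtend (hH : MonotoneOn H (Icc a (a + 1)))
    (hwrap : H (a + 1) = H a + 1) : Monotone (floorExtend a H) := by
  intro x y hxy
  have hx := sub_floor_sub_mem_Ico x a
  have hy := sub_floor_sub_mem_Ico y a
  have hk : ⌊x - a⌋ ≤ ⌊y - a⌋ := Int.floor_le_floor (by linarith)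
  rcases hk.eq_or_lt with hk | hk
  · have := hH (Ico_subset_Icc_self hx) (Ico_subset_Icc_self hy) (by rw [hk]; linarith)
    simp only [floorExtend]
    rw [hk] at this ⊢
    linarith
  · have hk1 : (⌊x - a⌋ : ℝ) + 1 ≤ ⌊y - a⌋ := by exact_mod_cast hk
    have hxa := hH (Ico_subset_Icc_self hx) (right_mem_Icc.2 (by linarith)) hx.2.le
    have hay := hH (left_mem_Icc.2 (by linarith)) (Ico_subset_Icc_self hy) hy.1
    simp only [floorExtend]
    linarith

theorem continuous_floorExtend {X : Type*} [TopologicalSpace X] {a : X → ℝ} {H : X → ℝ → ℝ}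
    (ha : Continuous a) (hH : Continuous (Function.uncurry H))
    (hwrap : ∀ p, H p (a p + 1) = H p (a p) + 1) :
    Continuous fun q : X × ℝ => floorExtend (a q.1) (H q.1) q.2 := by
  -- write `floorExtend` through `Int.fract (x - a)`, which `ContinuousOn.comp_fract` handles
  let G : X × ℝ → ℝ → ℝ := fun q u => H q.1 (a q.1 + u) + (q.2 - a q.1 - u)
  have hG : Continuous (Function.uncurry G) :=
    (hH.comp (by fun_prop : Continuous fun z : (X × ℝ) × ℝ => (z.1.1, a z.1.1 + z.2))).add
      (by fun_prop)
  refine (ContinuousOn.comp_fract (s := fun q : X × ℝ => q.2 - a q.1) hG.continuousOn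
    (by fun_prop) fun q => ?_).congr fun q => ?_
  · simp only [G, add_zero, hwrap]
    ring
  · simp only [G, floorExtend, Int.fract]
    ring_nf

end floorExtend

/-! In the coordinates `m = tan α`, `t = tan θ` the lift becomes rational in the parameters:
`a₀`, `a₁` are the break points, `Λ = (t + m) / (t - m)`, and `left`, `right` are the branches
`-a₁ + Λ⁻¹ (x - a₁)` and `1 - a₀ + Λ (x - a₀)`; their maximum `piece` switches from `left` to
`right` exactly at `a₀`. -/

namespace Trapezoid

noncomputable def a₀ (ℓ t : ℝ) : ℝ := (t - 2 * ℓ) / (2 * t)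

noncomputable def a₁ (ℓ m t : ℝ) : ℝ := -(2 * ℓ + m) / (2 * t)

noncomputable def left (ℓ m t x : ℝ) : ℝ := (2 * ℓ + m + (t - m) * x) / (t + m)

noncomputable def right (ℓ m t x : ℝ) : ℝ := (2 * ℓ - m + (t + m) * x) / (t - m)

noncomputable def piece (ℓ m t x : ℝ) : ℝ := max (left ℓ m t x) (right ℓ m t x)

noncomputable def lift (ℓ m t : ℝ) : ℝ → ℝ := floorExtend (a₁ ℓ m t) (piece ℓ m t)

section

variable {ℓ m t : ℝ} (hm : 0 < m) (hmt : m < t)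
include hm hmt

theorem left_sub_right (x : ℝ) :
    left ℓ m t x - right ℓ m t x = 4 * m * t * (a₀ ℓ t - x) / ((t + m) * (t - m)) := by
  have : t - m ≠ 0 := by linarith
  have : t + m ≠ 0 := by linarith
  have : t ≠ 0 := by linarith
  unfold left right a₀
  field_simp
  ring

theorem piece_eq_left {x : ℝ} (hx : x ≤ a₀ ℓ t) : piece ℓ m t x = left ℓ m t x := by
  have := left_sub_right (ℓ := ℓ) hm hmt x
  have : 0 < t := by linarith
  have : 0 ≤ 4 * m * t * (a₀ ℓ t - x) / ((t + m) * (t - m)) :=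
    div_nonneg (mul_nonneg (by positivity) (by linarith)) (mul_nonneg (by linarith) (by linarith))
  exact max_eq_left (by linarith)

theorem piece_eq_right {x : ℝ} (hx : a₀ ℓ t ≤ x) : piece ℓ m t x = right ℓ m t x := by
  have := left_sub_right (ℓ := ℓ) hm hmt x
  have : 0 < t := by linarith
  have : 4 * m * t * (a₀ ℓ t - x) / ((t + m) * (t - m)) ≤ 0 :=
    div_nonpos_of_nonpos_of_nonneg (mul_nonpos_of_nonneg_of_nonpos (by positivity) (by linarith))
      (mul_nonneg (by linarith) (by linarith))
  exact max_eq_right (by linarith)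

theorem monotone_piece : Monotone (piece ℓ m t) := by
  intro x y hxy
  have : 0 < t + m := by linarith
  have : 0 < t - m := by linarith
  unfold piece left right
  gcongr

theorem a₁_lt_a₀ : a₁ ℓ m t < a₀ ℓ t := by
  unfold a₀ a₁
  rw [div_lt_div_iff_of_pos_right (by linarith)]
  linarith

theorem a₀_lt_a₁_add_one : a₀ ℓ t < a₁ ℓ m t + 1 := by
  have : (0 : ℝ) < 2 * t := by linarith
  unfold a₀ a₁
  rw [div_lt_iff₀ this, add_mul, div_mul_cancel₀ _ this.ne']
  linarith

theorem piece_a₁_add_one : piece ℓ m t (a₁ ℓ m t + 1) = piece ℓ m t (a₁ ℓ m t) + 1 := by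
  rw [piece_eq_right hm hmt (a₀_lt_a₁_add_one hm hmt).le,
    piece_eq_left hm hmt (a₁_lt_a₀ hm hmt).le]
  have : t - m ≠ 0 := by linarith
  have : t + m ≠ 0 := by linarith
  have : t ≠ 0 := by linarith
  unfold left right a₁
  field_simp
  ring

theorem monotone_lift : Monotone (lift ℓ m t) :=
  monotone_floorExtend ((monotone_piece hm hmt).monotoneOn _) (piece_a₁_add_one hm hmt)

end

noncomputable def toCircleDeg1Lift (ℓ : ℝ) {m t : ℝ} (hm : 0 < m) (hmt : m < t) :
    CircleDeg1Lift where
  toFun := lift ℓ m t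
  monotone' := monotone_lift hm hmt
  map_add_one' := floorExtend_add_one

@[simp]
theorem coe_toCircleDeg1Lift {ℓ m t : ℝ} (hm : 0 < m) (hmt : m < t) :
    ⇑(toCircleDeg1Lift ℓ hm hmt) = lift ℓ m t :=
  rfl

theorem continuous_lift {ℓ m : ℝ} (hm : 0 < m) :
    Continuous fun p : {t // m < t} × ℝ => lift ℓ m p.1 p.2 := by
  have hpos : ∀ u : {t // m < t}, 0 < (u : ℝ) - m := fun u => sub_pos.2 u.2
  refine continuous_floorExtend (a := fun u : {t // m < t} => a₁ ℓ m u)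
    (H := fun u => piece ℓ m u) ?_ ?_ fun u => piece_a₁_add_one hm u.2
  · exact continuous_const.div (by fun_prop) fun u => by linarith [hpos u]
  · refine Continuous.max ?_ ?_
    · exact Continuous.div (by fun_prop) (by fun_prop) fun z => by linarith [hpos z.1]
    · exact Continuous.div (by fun_prop) (by fun_prop) fun z => (hpos z.1).ne'

section gap

variable {ℓ m t t' : ℝ} (hℓ : 0 < ℓ) (hm : 0 < m) (ht : 2 * ℓ + m < t) (htt' : t < t')
include hℓ hm ht htt'

theorem left_add_le_left {y : ℝ} (hy : y ≤ 1 / 2) :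
    left ℓ m t' y + 2 * ℓ * (t' - t) / (t' + m) ^ 2 ≤ left ℓ m t y := by
  have h₀ : 0 < t + m := by linarith
  have h₁ : 0 < t' + m := by linarith
  have key : left ℓ m t y - left ℓ m t' y =
      (t' - t) * (2 * ℓ + m - 2 * m * y) / ((t + m) * (t' + m)) := by
    unfold left
    field_simp
    ring
  have hnum : 2 * ℓ * (t' - t) ≤ (t' - t) * (2 * ℓ + m - 2 * m * y) := by
    nlinarith [mul_nonneg (sub_nonneg.2 htt'.le) (mul_nonneg hm.le (by linarith : 0 ≤ 1 - 2 * y))]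
  have : 2 * ℓ * (t' - t) / (t' + m) ^ 2 ≤
      (t' - t) * (2 * ℓ + m - 2 * m * y) / ((t + m) * (t' + m)) :=
    calc 2 * ℓ * (t' - t) / (t' + m) ^ 2 ≤ 2 * ℓ * (t' - t) / ((t + m) * (t' + m)) := by
          rw [sq]
          gcongr
      _ ≤ _ := by gcongr
  linarith

theorem right_add_le_right {y : ℝ} (hy : a₀ ℓ t ≤ y) :
    right ℓ m t' y + 2 * ℓ * (t' - t) / (t' + m) ^ 2 ≤ right ℓ m t y := by
  have h₀ : 0 < t - m := by linarith
  have h₁ : 0 < t' - m := by linarith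
  have key : right ℓ m t y - right ℓ m t' y =
      (t' - t) * (2 * ℓ - m + 2 * m * y) / ((t - m) * (t' - m)) := by
    unfold right
    field_simp
    ring
  have hy' : t - 2 * ℓ ≤ 2 * t * y := by
    rw [a₀, div_le_iff₀ (by linarith)] at hy
    linarith
  have hN : 2 * ℓ * (t - m) ≤ (2 * ℓ - m + 2 * m * y) * t := by nlinarith
  have hN' : 2 * ℓ * (t - m) * (t' - m) ≤ (2 * ℓ - m + 2 * m * y) * (t' + m) ^ 2 := by
    have : 0 ≤ 2 * ℓ - m + 2 * m * y := by nlinarith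
    have : t * (t' - m) ≤ (t' + m) ^ 2 := by nlinarith
    nlinarith [mul_le_mul_of_nonneg_right hN h₁.le]
  have : 2 * ℓ * (t' - t) / (t' + m) ^ 2 ≤
      (t' - t) * (2 * ℓ - m + 2 * m * y) / ((t - m) * (t' - m)) := by
    rw [div_le_div_iff₀ (by nlinarith) (by positivity)]
    nlinarith [mul_le_mul_of_nonneg_left hN' (sub_nonneg.2 htt'.le)]
  linarith

end gap

theorem right_le_left_sub_one_add_one {ℓ m t y : ℝ} (hm : 0 < m) (hmt : m < t)
    (hy : y ≤ a₁ ℓ m t + 1) : right ℓ m t y ≤ left ℓ m t (y - 1) + 1 := by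
  have h₀ : 0 < t - m := by linarith
  have h₁ : 0 < t + m := by linarith
  have h₂ : 0 < t := by linarith
  have key : left ℓ m t (y - 1) + 1 - right ℓ m t y =
      4 * m * t * (a₁ ℓ m t + 1 - y) / ((t + m) * (t - m)) := by
    unfold left right a₁
    field_simp
    ring
  have : 0 ≤ 4 * m * t * (a₁ ℓ m t + 1 - y) / ((t + m) * (t - m)) :=
    div_nonneg (mul_nonneg (by positivity) (by linarith)) (by positivity)
  linarith

theorem a₀_lt_half {ℓ t : ℝ} (hℓ : 0 < ℓ) (ht : 0 < t) : a₀ ℓ t < 1 / 2 := by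
  rw [a₀, div_lt_iff₀ (by linarith)]
  linarith

theorem half_lt_a₁_add_one {ℓ m t : ℝ} (h : 0 < 2 * ℓ + m) (ht : 2 * ℓ + m < t) :
    1 / 2 < a₁ ℓ m t + 1 := by
  have : (2 * ℓ + m) / (2 * t) < 1 / 2 := by
    rw [div_lt_iff₀ (by linarith)]
    linarith
  rw [a₁, neg_div]
  linarith

theorem a₀_lt_a₀ {ℓ t t' : ℝ} (hℓ : 0 < ℓ) (ht : 0 < t) (htt' : t < t') : a₀ ℓ t < a₀ ℓ t' := by
  rw [a₀, a₀, div_lt_div_iff₀ (by linarith) (by linarith)]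
  nlinarith

theorem a₁_lt_a₁ {ℓ m t t' : ℝ} (h : 0 < 2 * ℓ + m) (ht : 0 < t) (htt' : t < t') :
    a₁ ℓ m t < a₁ ℓ m t' := by
  rw [a₁, a₁, neg_div, neg_div, neg_lt_neg_iff]
  exact div_lt_div_of_pos_left h (by linarith) (by linarith)

theorem lift_add_le_lift_of_mem_Ico {ℓ m t t' y : ℝ} (hℓ : 0 < ℓ) (hm : 0 < m)
    (ht : 2 * ℓ + m < t) (htt' : t < t') (hy : y ∈ Ico (a₁ ℓ m t') (a₁ ℓ m t' + 1)) :
    lift ℓ m t' y + 2 * ℓ * (t' - t) / (t' + m) ^ 2 ≤ lift ℓ m t y := by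
  have hmt : m < t := by linarith
  have hmt' : m < t' := by linarith
  have ha₁ := a₁_lt_a₁ (ℓ := ℓ) (m := m) (by linarith) (by linarith) htt'
  have ha₁' : a₁ ℓ m t' < 0 := div_neg_of_neg_of_pos (by linarith) (by linarith)
  have ha₀ := a₀_lt_a₀ hℓ (by linarith) htt'
  have ha₀' := a₀_lt_half hℓ (by linarith : 0 < t')
  have ha₁_half := half_lt_a₁_add_one (by linarith) ht
  have hlow : ∀ z ∈ Ico (a₁ ℓ m t) (a₁ ℓ m t + 1),
      left ℓ m t z ≤ lift ℓ m t z ∧ right ℓ m t z ≤ lift ℓ m t z := fun z hz => by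
    rw [lift, floorExtend_of_mem_Ico hz]
    exact ⟨le_max_left _ _, le_max_right _ _⟩
  rw [show lift ℓ m t' y = piece ℓ m t' y from floorExtend_of_mem_Ico hy]
  rcases le_or_gt y (a₀ ℓ t') with hy₀ | hy₀
  · rw [piece_eq_left hm hmt' hy₀]
    exact (left_add_le_left hℓ hm ht htt' (by linarith)).trans
      (hlow y ⟨by linarith [hy.1], by linarith⟩).1
  rw [piece_eq_right hm hmt' hy₀.le]
  rcases lt_or_ge y (a₁ ℓ m t + 1) with hy₁ | hy₁
  · exact (right_add_le_right hℓ hm ht htt' (by linarith)).trans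
      (hlow y ⟨by linarith [hy.1], hy₁⟩).2
  · -- beyond `a₁ t + 1` the lift at `t` has wrapped around to its left branch
    have hshift : lift ℓ m t y = lift ℓ m t (y - 1) + 1 := by
      rw [lift, ← floorExtend_add_one, sub_add_cancel]
    have := right_le_left_sub_one_add_one hm hmt' hy.2.le
    have := left_add_le_left hℓ hm ht htt' (y := y - 1) (by linarith [hy.2])
    have := (hlow (y - 1) ⟨by linarith, by linarith [hy.2]⟩).1
    linarith

theorem lift_add_le_lift {ℓ m t t' : ℝ} (hℓ : 0 < ℓ) (hm : 0 < m) (ht : 2 * ℓ + m < t)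
    (htt' : t < t') (x : ℝ) : lift ℓ m t' x + 2 * ℓ * (t' - t) / (t' + m) ^ 2 ≤ lift ℓ m t x :=
  CircleDeg1Lift.forall_add_le_of_forall_mem_Ico (f := toCircleDeg1Lift ℓ hm (by linarith))
    (g := toCircleDeg1Lift ℓ hm (by linarith)) (a := a₁ ℓ m t')
    (fun _ hy => lift_add_le_lift_of_mem_Ico hℓ hm ht htt' hy) x

theorem rotationNumber_lift {ℓ m t : ℝ} (hm : 0 < m) (hmt : m < t) :
    rotationNumber (lift ℓ m t) = (toCircleDeg1Lift ℓ hm hmt).translationNumber := by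
  rw [← coe_toCircleDeg1Lift hm hmt, CircleDeg1Lift.rotationNumber_eq_translationNumber]

theorem continuousOn_rotationNumber_lift {ℓ m : ℝ} (hm : 0 < m) :
    ContinuousOn (fun t => rotationNumber (lift ℓ m t)) (Ioi m) := by
  rw [continuousOn_iff_continuous_domRestrict]
  refine (CircleDeg1Lift.continuous_translationNumber
    (f := fun u : {t // m < t} => toCircleDeg1Lift ℓ hm u.2) (continuous_lift hm)).congr
    fun u => (rotationNumber_lift hm u.2).symm

theorem rotationNumber_lift_lt {ℓ m t t' : ℝ} (hℓ : 0 < ℓ) (hm : 0 < m) (ht : 2 * ℓ + m < t)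
    (htt' : t < t') (hirr : Irrational (rotationNumber (lift ℓ m t'))) :
    rotationNumber (lift ℓ m t') < rotationNumber (lift ℓ m t) := by
  have hmt : m < t := by linarith
  have hmt' : m < t' := by linarith
  rw [rotationNumber_lift hm hmt, rotationNumber_lift hm hmt'] at *
  have : 0 < t' + m := by linarith
  exact CircleDeg1Lift.translationNumber_lt_of_irrational
    (div_pos (mul_pos (by positivity) (by linarith)) (by positivity))
    (lift_add_le_lift hℓ hm ht htt') hirr

theorem exists_rotationNumber_lift_eq_rat {ℓ m t₁ t₂ : ℝ} (hℓ : 0 < ℓ) (hm : 0 < m)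
    (ht₁ : 2 * ℓ + m < t₁) (h₁₂ : t₁ < t₂) :
    ∃ t ∈ Icc t₁ t₂, ∃ r : ℚ, rotationNumber (lift ℓ m t) = r := by
  by_cases hirr : Irrational (rotationNumber (lift ℓ m t₂))
  · obtain ⟨r, hr₂, hr₁⟩ := exists_rat_btwn (rotationNumber_lift_lt hℓ hm ht₁ h₁₂ hirr)
    have hcont := (continuousOn_rotationNumber_lift (ℓ := ℓ) hm).mono
      fun t (ht : t ∈ Icc t₁ t₂) => show m < t by linarith [ht.1]
    obtain ⟨t, ht, htr⟩ := intermediate_value_Icc' h₁₂.le hcont ⟨hr₂.le, hr₁.le⟩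
    exact ⟨t, ht, r, htr⟩
  · obtain ⟨r, hr⟩ := not_not.1 hirr
    exact ⟨t₂, right_mem_Icc.2 h₁₂.le, r, hr.symm⟩

end Trapezoid

theorem Lam_eq_tan {α θ : ℝ} (hα : cos α ≠ 0) (hθ : cos θ ≠ 0) :
    Lam α θ = (tan θ + tan α) / (tan θ - tan α) := by
  rw [Lam, sin_add, sin_sub, tan_eq_sin_div_cos, tan_eq_sin_div_cos, div_add_div _ _ hθ hα,
    div_sub_div _ _ hθ hα, div_div_div_cancel_right₀ (mul_ne_zero hθ hα)]

theorem Ftrap_arctan_eq_lift {ℓ α t : ℝ} (hα : 0 < α) (hα2 : α < π / 2) (ht : tan α < t) :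
    Ftrap ℓ α (arctan t) = Trapezoid.lift ℓ (tan α) t := by
  have hm : 0 < tan α := tan_pos_of_pos_of_lt_pi_div_two hα hα2
  have hΛ : Lam α (arctan t) = (t + tan α) / (t - tan α) := by
    rw [Lam_eq_tan (cos_pos_of_mem_Ioo ⟨by linarith, hα2⟩).ne' (cos_arctan_pos t).ne', tan_arctan]
  have h₀ : 0 < t := by linarith
  have h₁ : 0 < t - tan α := by linarith
  have h₂ : 0 < t + tan α := by linarith
  have hbrk₀ : brk0 ℓ (arctan t) = Trapezoid.a₀ ℓ t := by rw [brk0, tan_arctan, Trapezoid.a₀]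
  have hbrk₁ : brk1 ℓ α (arctan t) = Trapezoid.a₁ ℓ (tan α) t := by rw [brk1, tan_arctan, Trapezoid.a₁]
  have hpiece : Ftrap0 ℓ α (arctan t) = Trapezoid.piece ℓ (tan α) t := by
    funext x
    rw [Ftrap0, hbrk₀, hbrk₁, hΛ]
    split_ifs with hx
    · rw [Trapezoid.piece_eq_left hm ht hx, Trapezoid.left, Trapezoid.a₁]
      field_simp
      ring
    · rw [Trapezoid.piece_eq_right hm ht (not_le.1 hx).le, Trapezoid.right, Trapezoid.a₀]
      field_simp
      ring
  change floorExtend _ _ = _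
  rw [hbrk₁, hpiece, Trapezoid.lift]

theorem exists_mem_Ioo_rotationNumber_Ftrap_eq_rat {ℓ α : ℝ} (hℓ : 0 < ℓ) (hα : 0 < α)
    (hα2 : α < π / 2) {a b : ℝ} (ha : arctan (2 * ℓ + tan α) ≤ a) (hab : a < b) (hb : b ≤ π / 2) :
    ∃ θ ∈ Ioo a b, ∃ r : ℚ, rotationNumber (Ftrap ℓ α θ) = r := by
  have hm : 0 < tan α := tan_pos_of_pos_of_lt_pi_div_two hα hα2
  obtain ⟨a', haa', ha'b⟩ := exists_between hab
  obtain ⟨b', ha'b', hb'b⟩ := exists_between ha'b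
  have hpos : 0 < a' := (arctan_pos.2 (by positivity)).trans_le ha |>.trans haa'
  have htan : StrictMonoOn tan (Ioo (-(π / 2)) (π / 2)) := strictMonoOn_tan
  have ha'mem : a' ∈ Ioo (-(π / 2)) (π / 2) := ⟨by linarith [pi_pos], by linarith⟩
  have hb'mem : b' ∈ Ioo (-(π / 2)) (π / 2) := ⟨by linarith [pi_pos], by linarith⟩
  have ht₁ : 2 * ℓ + tan α < tan a' := by
    rw [← tan_arctan (2 * ℓ + tan α)]
    exact htan ⟨by linarith [neg_pi_div_two_lt_arctan (2 * ℓ + tan α)],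
      arctan_lt_pi_div_two _⟩ ha'mem (by linarith)
  obtain ⟨t, ⟨ht₁', ht₂'⟩, r, hr⟩ :=
    Trapezoid.exists_rotationNumber_lift_eq_rat hℓ hm ht₁ (htan ha'mem hb'mem ha'b')
  refine ⟨arctan t, ⟨?_, ?_⟩, r, by rw [Ftrap_arctan_eq_lift hα hα2 (by linarith), hr]⟩
  · calc a < a' := haa'
      _ = arctan (tan a') := (arctan_tan ha'mem.1 ha'mem.2).symm
      _ ≤ arctan t := arctan_strictMono.monotone ht₁'
  · calc arctan t ≤ arctan (tan b') := arctan_strictMono.monotone ht₂'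
      _ = b' := arctan_tan hb'mem.1 hb'mem.2
      _ < b := hb'b

/-- the set of parameters θ with irrational rotation number has
empty interior; equivalently, every nonempty open subinterval of the
parameter interval contains a θ with rational rotation number. -/
theorem stmt17 (ℓ α : ℝ) (hℓ : 0 < ℓ) (hα : 0 < α) (hα2 : α < π / 2) :
    interior {θ : ℝ | θ ∈ Set.Ioo (Real.arctan (2 * ℓ + Real.tan α)) (π / 2) ∧
      Irrational (rotationNumber (Ftrap ℓ α θ))} = ∅ ∧
    ∀ a b : ℝ, Real.arctan (2 * ℓ + Real.tan α) ≤ a → a < b → b ≤ π / 2 →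
      ∃ θ ∈ Set.Ioo a b, ∃ r : ℚ, rotationNumber (Ftrap ℓ α θ) = (r : ℝ) := by
  refine ⟨eq_empty_iff_forall_notMem.2 fun θ hθ => ?_,
    fun a b => exists_mem_Ioo_rotationNumber_Ftrap_eq_rat hℓ hα hα2⟩
  obtain ⟨a, b, hθab, hsub⟩ := mem_nhds_iff_exists_Ioo_subset.1 (isOpen_interior.mem_nhds hθ)
  have hab : a < b := hθab.1.trans hθab.2
  have hS : Ioo a b ⊆ Ioo (arctan (2 * ℓ + tan α)) (π / 2) :=
    fun x hx => (interior_subset (hsub hx)).1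
  rw [Ioo_subset_Ioo_iff hab] at hS
  obtain ⟨θ', hθ', r, hr⟩ := exists_mem_Ioo_rotationNumber_Ftrap_eq_rat hℓ hα hα2 hS.1 hab hS.2
  exact (interior_subset (hsub hθ')).2 ⟨r, hr.symm⟩
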